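/- Let 𝔄 be an excellent based A-algebra, 𝐜 a two-sided cell of I, and a the common value of the a-function on 𝐜 (the a-function is constant on two-sided cells by Q3). Let r ≥ 1 and (i_1, i_2, …, i_r) ∈ I^r, and write b_{i_1} b_{i_2} ⋯ b_{i_r} = Σ_{i∈I, k∈ℤ} N(i,k) v^k b_i with N(i,k) ∈ ℤ. Then: if i ∈ 𝐜 and N(i,k) ≠ 0 then k ≥ −(r−1)a; and if i ∈ 𝐜 and N(i, −(r−1)a) ≠ 0 then i_u ∈ 𝐜 for all u ∈ {1,…,r}. -/

import Mathlib

open scoped Classical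
open Finset

noncomputable section

/-- The ring `A = ℤ[v,v⁻¹]` of Laurent polynomials over `ℤ`. -/
abbrev LP : Type := LaurentPolynomial ℤ

/-- The coefficient of `v^n` in a Laurent polynomial. -/
def lcoeff (f : LP) (n : ℤ) : ℤ := (f.coeff : ℤ →₀ ℤ) n

/-- A based `A`-algebra (Lusztig, 1.9), encoded by its structure constants
`h i i' j` (the coefficient of `b j` in `b i * b i'`), the coordinates `e i` of the
unit element, the involution `einv` of the index set (written `i ↦ i^!`), and the
distinguished subset `I0` of `{i | i^! = i}`. -/
structure BasedAlgebra (I : Type) [Fintype I] [DecidableEq I] where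
  h : I → I → I → LP
  e : I → LP
  einv : I → I
  I0 : Finset I
  einv_invol : ∀ i, einv (einv i) = i
  mul_assoc' : ∀ i j k l, ∑ m, h i j m * h m k l = ∑ m, h j k m * h i m l
  one_mul' : ∀ j k, ∑ i, e i * h i j k = if j = k then 1 else 0
  mul_one' : ∀ j k, ∑ i, e i * h j i k = if j = k then 1 else 0
  anti' : ∀ i i' j, h (einv i) (einv i') (einv j) = h i' i j
  I0_fixed : ∀ i ∈ I0, einv i = i

namespace BasedAlgebra

variable {I : Type} [Fintype I] [DecidableEq I]

/-- The preorder `⪯_left` on `I`, generated by: `j ⪯_left i` if `h i' i j ≠ 0` for some `i'`. -/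
def leLeft (B : BasedAlgebra I) : I → I → Prop :=
  Relation.ReflTransGen (fun j i => ∃ i', B.h i' i j ≠ 0)

/-- The preorder `⪯` on `I`, generated by:
`j ⪯ i` if `h i i' j ≠ 0` or `h i' i j ≠ 0` for some `i'`. -/
def leTwo (B : BasedAlgebra I) : I → I → Prop :=
  Relation.ReflTransGen (fun j i => ∃ i', B.h i i' j ≠ 0 ∨ B.h i' i j ≠ 0)

/-- The equivalence relation `∼_left` whose classes are the left cells. -/
def simLeft (B : BasedAlgebra I) (i j : I) : Prop := B.leLeft i j ∧ B.leLeft j i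

/-- The equivalence relation `∼` whose classes are the two-sided cells. -/
def simTwo (B : BasedAlgebra I) (i j : I) : Prop := B.leTwo i j ∧ B.leTwo j i

/-- `c` is a left cell. -/
def IsLeftCell (B : BasedAlgebra I) (c : Set I) : Prop := ∃ i, c = {j | B.simLeft j i}

/-- `c` is a two-sided cell. -/
def IsTwoCell (B : BasedAlgebra I) (c : Set I) : Prop := ∃ i, c = {j | B.simTwo j i}

/-- Lusztig's `a`-function: `a j` is the smallest `m : ℕ` such that
`h i i' j ∈ v^{-m} ℤ[v]` for all `i, i'`. -/
def af (B : BasedAlgebra I) (j : I) : ℕ :=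
  sInf {m : ℕ | ∀ i i' : I, ∀ n : ℤ, n < -(m : ℤ) → lcoeff (B.h i i' j) n = 0}

/-- The leading coefficients: `h i i' (j^!) = (hstar i i' j) v^{-a(j^!)} +` higher powers. -/
def hstar (B : BasedAlgebra I) (i i' j : I) : ℤ :=
  lcoeff (B.h i i' (B.einv j)) (-(B.af (B.einv j) : ℤ))

/-- The based algebra is *excellent* if properties Q1–Q11 of Lusztig (1.9) hold. -/
structure Excellent (B : BasedAlgebra I) : Prop where
  q1 : ∀ j ∈ B.I0, ∀ i i', B.hstar i i' j ≠ 0 → i' = B.einv i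
  q2 : ∀ i, ∃! j, j ∈ B.I0 ∧ B.hstar (B.einv i) i j ≠ 0
  q3 : ∀ i' i, B.leTwo i' i → B.af i ≤ B.af i'
  q4 : ∀ j ∈ B.I0, ∀ i, B.hstar (B.einv i) i j ≠ 0 → B.hstar (B.einv i) i j = 1
  q5 : ∀ i j k, B.hstar i j k = B.hstar j k i
  q6 : ∀ i j k, B.hstar i j k ≠ 0 →
    B.simLeft i (B.einv j) ∧ B.simLeft j (B.einv k) ∧ B.simLeft k (B.einv i)
  q7 : ∀ i' i, B.leLeft i' i → B.af i' = B.af i → B.simLeft i' i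
  q8 : ∀ i' i, B.leTwo i' i → B.af i' = B.af i → B.simTwo i' i
  q9a : ∀ i, ∃! j, j ∈ B.I0 ∧ B.simLeft j i
  q9b : ∀ i j, j ∈ B.I0 → B.simLeft j i → B.hstar (B.einv i) i j = 1
  q10 : ∀ i, B.simTwo i (B.einv i)
  q11 : ∀ i i' j k, B.af j = B.af k → ∀ p q : ℤ,
    ∑ j', lcoeff (B.h k i' j') p * lcoeff (B.h i j' j) q
      = ∑ j', lcoeff (B.h i k j') q * lcoeff (B.h j' i' j) p

/-- The multiplication of the asymptotic ring `𝔄^∞`, on coordinates with respect to the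
basis `{t_i}`: `t_i t_{i'} = ∑_j h*_{i,i',j^!} t_j`. -/
def tmul (B : BasedAlgebra I) (x y : I → ℤ) : I → ℤ :=
  fun j => ∑ i, ∑ i', x i * y i' * B.hstar i i' (B.einv j)

/-- The element `∑_{i ∈ I₀} t_i` of `𝔄^∞`. -/
def tone (B : BasedAlgebra I) : I → ℤ := fun i => if i ∈ B.I0 then 1 else 0

/-- The basis element `t_i` of `𝔄^∞`. -/
def tbasis (B : BasedAlgebra I) (i : I) : I → ℤ := fun j => if j = i then 1 else 0

end BasedAlgebra

namespace BasedAlgebra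

variable {I : Type} [Fintype I] [DecidableEq I]

/-- The coordinates of the basis element `b_i` of `𝔄`. -/
def bvec (_B : BasedAlgebra I) (i : I) : I → LP := fun j => if j = i then 1 else 0

/-- Multiplication of `𝔄`, on coordinates with respect to the basis `{b_i}`. -/
def amul (B : BasedAlgebra I) (x y : I → LP) : I → LP :=
  fun j => ∑ i, ∑ i', x i * y i' * B.h i i' j

/-- The product `b_{f 0} b_{f 1} ⋯ b_{f (n-1)}` in `𝔄`, on coordinates. -/
def aprod (B : BasedAlgebra I) (f : ℕ → I) : ℕ → (I → LP)
  | 0 => B.e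
  | n + 1 => B.amul (B.aprod f n) (B.bvec (f n))

end BasedAlgebra


/-!
Induct on `r`. The coefficient of `b_j` in `(b_{i_1} ⋯ b_{i_{r-1}}) b_{i_r}` is a sum of products
of a coefficient of `b_i` in the shorter product with `h_{i,i_r,j}`. Only `i` with `a(i) ≤ a(j)`
contribute (Q3), and `h_{i,i_r,j} ∈ v^{-a(j)} ℤ[v]`, so the lowest degree drops by at most `a(j)`
at each step. If the bound `-(r-1)a(j)` is attained, both factors attain their bounds: then
`h*_{i,i_r,j^!} ≠ 0`, and Q6 with Q10 puts `i` and `i_r` in the two-sided cell of `j`.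
-/

theorem lcoeff_sum {ι : Type*} (s : Finset ι) (g : ι → LP) (n : ℤ) :
    lcoeff (∑ x ∈ s, g x) n = ∑ x ∈ s, lcoeff (g x) n := by
  simp [lcoeff]

theorem exists_lcoeff_ne_zero_of_lcoeff_mul_ne_zero {p q : LP} {k : ℤ}
    (h : lcoeff (p * q) k ≠ 0) : ∃ m, lcoeff p m ≠ 0 ∧ lcoeff q (k - m) ≠ 0 := by
  obtain ⟨m, hm, m', hm', rfl⟩ := Finset.mem_add.mp
    (AddMonoidAlgebra.support_coeff_mul_subset p q (Finsupp.mem_support_iff.mpr h))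
  exact ⟨m, Finsupp.mem_support_iff.mp hm, by simpa [lcoeff] using Finsupp.mem_support_iff.mp hm'⟩

theorem eq_zero_of_lcoeff_one_ne_zero {k : ℤ} (h : lcoeff 1 k ≠ 0) : k = 0 := by
  simpa using AddMonoidAlgebra.support_coeff_one_subset (Finsupp.mem_support_iff.mpr h)

theorem exists_lcoeff_eq_zero_of_lt (p : LP) : ∃ m : ℕ, ∀ n < -(m : ℤ), lcoeff p n = 0 :=
  ⟨p.coeff.support.sup Int.natAbs, fun n hn => Finsupp.notMem_support_iff.mp fun hmem => by
    have := Finset.le_sup (f := Int.natAbs) hmem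
    omega⟩

namespace BasedAlgebra

variable {I : Type} [Fintype I] [DecidableEq I] (B : BasedAlgebra I)

theorem lcoeff_h_eq_zero_of_lt_neg_af {j : I} (i i' : I) {n : ℤ} (hn : n < -(B.af j : ℤ)) :
    lcoeff (B.h i i' j) n = 0 := by
  choose m hm using fun p : I × I => exists_lcoeff_eq_zero_of_lt (B.h p.1 p.2 j)
  obtain ⟨M, hM⟩ := Finite.exists_le m
  have hmem : B.af j ∈ {m : ℕ | ∀ i i' : I, ∀ n : ℤ, n < -(m : ℤ) → lcoeff (B.h i i' j) n = 0} :=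
    Nat.sInf_mem ⟨M, fun i i' n hn => hm (i, i') n (by have := hM (i, i'); omega)⟩
  exact hmem i i' n hn

theorem neg_af_le_of_lcoeff_h_ne_zero {i i' j : I} {n : ℤ} (h : lcoeff (B.h i i' j) n ≠ 0) :
    -(B.af j : ℤ) ≤ n :=
  not_lt.mp fun hn => h (B.lcoeff_h_eq_zero_of_lt_neg_af i i' hn)

theorem simTwo_equivalence : Equivalence B.simTwo where
  refl _ := ⟨.refl, .refl⟩
  symm h := ⟨h.2, h.1⟩
  trans h h' := ⟨h.1.trans h'.1, h'.2.trans h.2⟩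

theorem leTwo_of_leLeft {i j : I} (h : B.leLeft i j) : B.leTwo i j :=
  Relation.ReflTransGen.mono (fun _ _ ⟨i', hi⟩ => ⟨i', Or.inr hi⟩) _ _ h

theorem simTwo_of_simLeft {i j : I} (h : B.simLeft i j) : B.simTwo i j :=
  ⟨B.leTwo_of_leLeft h.1, B.leTwo_of_leLeft h.2⟩

theorem leTwo_left_of_h_ne_zero {i i' j : I} (h : B.h i i' j ≠ 0) : B.leTwo j i :=
  .single ⟨i', Or.inl h⟩

theorem aprod_succ_apply (f : ℕ → I) (n : ℕ) (j : I) :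
    B.aprod f (n + 1) j = ∑ i, B.aprod f n i * B.h i (f n) j := by
  simp [aprod, amul, bvec]

theorem aprod_one_apply (f : ℕ → I) (j : I) : B.aprod f 1 j = if f 0 = j then 1 else 0 := by
  rw [aprod_succ_apply]
  exact B.one_mul' (f 0) j

theorem exists_of_lcoeff_aprod_succ_ne_zero {f : ℕ → I} {n : ℕ} {j : I} {k : ℤ}
    (hk : lcoeff (B.aprod f (n + 1) j) k ≠ 0) :
    ∃ i m, lcoeff (B.aprod f n i) m ≠ 0 ∧ lcoeff (B.h i (f n) j) (k - m) ≠ 0 := by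
  rw [aprod_succ_apply, lcoeff_sum] at hk
  obtain ⟨i, -, hi⟩ := Finset.exists_ne_zero_of_sum_ne_zero hk
  obtain ⟨m, hm⟩ := exists_lcoeff_ne_zero_of_lcoeff_mul_ne_zero hi
  exact ⟨i, m, hm⟩

theorem eq_of_lcoeff_aprod_one_ne_zero {f : ℕ → I} {j : I} {k : ℤ}
    (hk : lcoeff (B.aprod f 1 j) k ≠ 0) : f 0 = j ∧ k = 0 := by
  rw [aprod_one_apply] at hk
  split_ifs at hk with hj
  · exact ⟨hj, eq_zero_of_lcoeff_one_ne_zero hk⟩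
  · exact absurd rfl hk

variable {B} (hB : B.Excellent)
include hB

theorem af_le_af_of_lcoeff_h_ne_zero {i i' j : I} {n : ℤ} (h : lcoeff (B.h i i' j) n ≠ 0) :
    B.af i ≤ B.af j :=
  hB.q3 j i (B.leTwo_left_of_h_ne_zero fun h0 => h (by rw [h0]; rfl))

/-- A nonzero coefficient of `v^{-a(j)}` in `h i i' j` is a nonzero `h*_{i,i',j^!}`; by Q6 and
Q10 it puts all three indices in one two-sided cell. -/
theorem simTwo_of_lcoeff_h_neg_af_ne_zero {i i' j : I}
    (h : lcoeff (B.h i i' j) (-(B.af j : ℤ)) ≠ 0) : B.simTwo i j ∧ B.simTwo i' j := by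
  have hstar_ne : B.hstar i i' (B.einv j) ≠ 0 := by
    rwa [hstar, B.einv_invol]
  obtain ⟨-, hi'j, hji⟩ := hB.q6 _ _ _ hstar_ne
  rw [B.einv_invol] at hi'j
  have e := B.simTwo_equivalence
  refine ⟨e.trans (hB.q10 i) (e.trans (e.symm (B.simTwo_of_simLeft hji)) (e.symm (hB.q10 j))),
    B.simTwo_of_simLeft hi'j⟩

theorem neg_mul_af_le_of_lcoeff_aprod_ne_zero (f : ℕ → I) (n : ℕ) {j : I} {k : ℤ}
    (hk : lcoeff (B.aprod f (n + 1) j) k ≠ 0) : -(n * B.af j : ℤ) ≤ k := by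
  induction n generalizing j k with
  | zero => simp [(B.eq_of_lcoeff_aprod_one_ne_zero hk).2]
  | succ n ih =>
    obtain ⟨i, m, hm, hkm⟩ := B.exists_of_lcoeff_aprod_succ_ne_zero hk
    have haf : (n * B.af i : ℤ) ≤ n * B.af j := by
      gcongr; exact_mod_cast af_le_af_of_lcoeff_h_ne_zero hB hkm
    have hm_ge := ih hm
    have hkm_ge := B.neg_af_le_of_lcoeff_h_ne_zero hkm
    push_cast
    linarith

theorem simTwo_of_lcoeff_aprod_neg_mul_af_ne_zero (f : ℕ → I) (n : ℕ) {j : I}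
    (hk : lcoeff (B.aprod f (n + 1) j) (-(n * B.af j : ℤ)) ≠ 0) : ∀ u ≤ n, B.simTwo (f u) j := by
  induction n generalizing j with
  | zero =>
    intro u hu
    obtain rfl : u = 0 := by omega
    rw [(B.eq_of_lcoeff_aprod_one_ne_zero hk).1]
    exact B.simTwo_equivalence.refl j
  | succ n ih =>
    obtain ⟨i, m, hm, hkm⟩ := B.exists_of_lcoeff_aprod_succ_ne_zero hk
    have haf : (n * B.af i : ℤ) ≤ n * B.af j := by
      gcongr; exact_mod_cast af_le_af_of_lcoeff_h_ne_zero hB hkm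
    have hm_ge := neg_mul_af_le_of_lcoeff_aprod_ne_zero hB f n hm
    have hkm_ge := B.neg_af_le_of_lcoeff_h_ne_zero hkm
    have hm_eq : m = -(n * B.af i : ℤ) := by push_cast at hkm_ge; linarith
    have hkm_eq : -((n + 1 : ℕ) * B.af j : ℤ) - m = -(B.af j : ℤ) := by
      push_cast at hkm_ge ⊢; linarith
    rw [hkm_eq] at hkm
    obtain ⟨hij, hfj⟩ := simTwo_of_lcoeff_h_neg_af_ne_zero hB hkm
    intro u hu
    rcases Nat.lt_or_ge u (n + 1) with hu' | hu'
    · exact B.simTwo_equivalence.trans (ih (hm_eq ▸ hm) u (by omega)) hij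
    · obtain rfl : u = n + 1 := by omega
      exact hfj

end BasedAlgebra

/-- Lusztig 1.10(a). Let `𝐜` be a two-sided cell of an excellent based
`A`-algebra with `a`-function constant equal to `a₀` on `𝐜`. Write
`b_{i_1} ⋯ b_{i_r} = ∑_{i,k} N(i,k) v^k b_i` (here `r = r₀ + 1 ≥ 1` and `i_u = f (u-1)`).
If `i ∈ 𝐜` and `N(i,k) ≠ 0` then `k ≥ -(r-1)a₀`; and if `i ∈ 𝐜` and
`N(i, -(r-1)a₀) ≠ 0` then `i_u ∈ 𝐜` for all `u`. -/
theorem statement6 {I : Type} [Fintype I] [DecidableEq I]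
    (B : BasedAlgebra I) (hB : B.Excellent)
    (c : Set I) (hc : B.IsTwoCell c) (a0 : ℕ) (ha0 : ∀ i ∈ c, B.af i = a0)
    (r0 : ℕ) (f : ℕ → I) :
    (∀ i ∈ c, ∀ k : ℤ, lcoeff (B.aprod f (r0 + 1) i) k ≠ 0 → -((r0 : ℤ) * (a0 : ℤ)) ≤ k) ∧
    (∀ i ∈ c, lcoeff (B.aprod f (r0 + 1) i) (-((r0 : ℤ) * (a0 : ℤ))) ≠ 0 →
      ∀ u ≤ r0, f u ∈ c) := by
  obtain ⟨i₀, rfl⟩ := hc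
  refine ⟨fun i hi k hk => ?_, fun i hi hk u hu => ?_⟩
  · simpa [ha0 i hi] using BasedAlgebra.neg_mul_af_le_of_lcoeff_aprod_ne_zero hB f r0 hk
  · rw [← ha0 i hi] at hk
    exact B.simTwo_equivalence.trans
      (BasedAlgebra.simTwo_of_lcoeff_aprod_neg_mul_af_ne_zero hB f r0 hk u hu) hi
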